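/- arXiv:1612.06740 — 3 statements merged into one kernel-verified Lean document; each statement's English description precedes it below -/
import Mathlib

section
/- For every coinductive simple type A, the term Ω = (λx. x x)(λx. x x) is typable with A in the empty context: ⊢ Ω : A. (Proof idea: let F_A be the unique coinductive type with F_A = F_A → A; then x : F_A ⊢ x x : A, so ⊢ λx. x x : F_A → A = F_A, hence ⊢ Ω : A.) -/
inductive Term : Type
  | var : ℕ → Term
  | lam : Term → Term
  | app : Term → Term → Term
  deriving DecidableEq

/-- de Bruijn shifting: `Term.shift d c t` adds `d` to every variable of `t` that is `≥ c`. -/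
def Term.shift (d : ℕ) : ℕ → Term → Term
  | c, .var n => if n < c then .var n else .var (n + d)
  | c, .lam t => .lam (Term.shift d (c + 1) t)
  | c, .app t u => .app (Term.shift d c t) (Term.shift d c u)

/-- Capture-avoiding substitution: `Term.subst k s t` substitutes `s` for variable `k` in `t`. -/
def Term.subst : ℕ → Term → Term → Term
  | k, s, .var n => if n < k then .var n else if n = k then Term.shift k 0 s else .var (n - 1)
  | k, s, .lam b => .lam (Term.subst (k + 1) s b)
  | k, s, .app t u => .app (Term.subst k s t) (Term.subst k s u)

/-- One-step β-reduction. -/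
inductive Beta : Term → Term → Prop
  | beta (b a : Term) : Beta (.app (.lam b) a) (Term.subst 0 a b)
  | appL {t t'} (u : Term) : Beta t t' → Beta (.app t u) (.app t' u)
  | appR (t : Term) {u u'} : Beta u u' → Beta (.app t u) (.app t u')
  | lam {t t'} : Beta t t' → Beta (.lam t) (.lam t')

/-- Labels of nodes of a coinductive simple type: an atom `o` or an arrow. -/
inductive CLabel : Type
  | atom : ℕ → CLabel
  | arrow : CLabel
  deriving DecidableEq

/-- A coinductive simple type `A ::= o | A → B`, represented as a (possibly infinite)
labelled binary tree: positions are lists of booleans (`false` = source of arrow,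
`true` = target of arrow). -/
structure CType : Type where
  label : List Bool → Option CLabel
  root_some : (label []).isSome
  prefix_closed : ∀ c b, (label (c ++ [b])).isSome → (label c).isSome
  arrow_children : ∀ c, label c = some .arrow → ∀ b, (label (c ++ [b])).isSome
  atom_leaf : ∀ c o, label c = some (.atom o) → ∀ b, label (c ++ [b]) = none

/-- `IsArrow A B C` expresses that `C = A → B` as infinite trees. -/
def IsArrow (A B C : CType) : Prop :=
  C.label [] = some .arrow ∧
    (∀ d, C.label (false :: d) = A.label d) ∧ (∀ d, C.label (true :: d) = B.label d)

/-- Extend a (de Bruijn) context with a type for the newly bound variable 0. -/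
def push {α : Type _} (Γ : ℕ → α) (A : α) : ℕ → α := fun n =>
  match n with
  | 0 => A
  | n + 1 => Γ n

/-- Typing in the coinductively-typed simply typed λ-calculus:
finite derivations, possibly infinite types. -/
inductive CTyping : (ℕ → CType) → Term → CType → Prop
  | var (Γ : ℕ → CType) (n : ℕ) : CTyping Γ (.var n) (Γ n)
  | abs {Γ A B C t} : IsArrow A B C → CTyping (push Γ A) t B → CTyping Γ (.lam t) C
  | app {Γ A B C t u} : IsArrow A B C → CTyping Γ t C → CTyping Γ u A →
      CTyping Γ (.app t u) B

def Delta : Term := .lam (.app (.var 0) (.var 0))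
def Omega : Term := .app Delta Delta

/-- Label function of `F_A`, the type satisfying `F_A = F_A → A`. -/
def Flabel (A : CType) : List Bool → Option CLabel
  | [] => some .arrow
  | false :: d => Flabel A d
  | true :: d => A.label d

/-- The coinductive type `F_A` with `F_A = F_A → A`. -/
def FixC (A : CType) : CType where
  label := Flabel A
  root_some := by simp [Flabel]
  prefix_closed := by
    intro c
    induction c with
    | nil => intro b _; simp [Flabel]
    | cons x c ih =>
      cases x with
      | false => intro b h; exact ih b h
      | true => intro b h; exact A.prefix_closed c b h
  arrow_children := by
    intro c
    induction c with
    | nil =>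
      intro _ b
      cases b with
      | false => simp [Flabel]
      | true => exact A.root_some
    | cons x c ih =>
      cases x with
      | false => intro h b; exact ih h b
      | true => intro h b; exact A.arrow_children c h b
  atom_leaf := by
    intro c
    induction c with
    | nil => intro o h; simp [Flabel] at h
    | cons x c ih =>
      cases x with
      | false => intro o h b; exact ih o h b
      | true => intro o h b; exact A.atom_leaf c o h b

lemma isArrow_fix (A : CType) : IsArrow (FixC A) A (FixC A) :=
  ⟨rfl, fun _ => rfl, fun _ => rfl⟩

/-- For every coinductive simple type `A`, the closed term `Ω` is typable with `A`. -/
theorem omega_typable_with_every_type (A : CType) (Γ : ℕ → CType) :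
    CTyping Γ Omega A := by
  have hx : CTyping (push Γ (FixC A)) (.var 0) (FixC A) :=
    CTyping.var (push Γ (FixC A)) 0
  have hxx : CTyping (push Γ (FixC A)) (.app (.var 0) (.var 0)) A :=
    CTyping.app (isArrow_fix A) hx hx
  have hD : CTyping Γ Delta (FixC A) := CTyping.abs (isArrow_fix A) hxx
  exact CTyping.app (isArrow_fix A) hD hD
end

section
/- The coinductively-typed simply typed λ-calculus satisfies subject reduction: if Γ ⊢ t : A is derivable and t →β t', then Γ ⊢ t' : A is derivable. -/
lemma CType.ext' {A B : CType} (h : A.label = B.label) : A = B := by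
  cases A; cases B; simp_all

lemma IsArrow.unique {A B A' B' C : CType} (h : IsArrow A B C) (h' : IsArrow A' B' C) :
    A = A' ∧ B = B' := by
  constructor
  · exact CType.ext' (funext fun d => by rw [← h.2.1 d, h'.2.1 d])
  · exact CType.ext' (funext fun d => by rw [← h.2.2 d, h'.2.2 d])

lemma shift_typing {Γ : ℕ → CType} {t : Term} {A : CType} (h : CTyping Γ t A) (d : ℕ) :
    ∀ c (Δ : ℕ → CType), (∀ n, n < c → Δ n = Γ n) → (∀ n, c ≤ n → Δ (n + d) = Γ n) →
    CTyping Δ (Term.shift d c t) A := by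
  induction h with
  | var Γ n =>
    intro c Δ h1 h2
    simp only [Term.shift]
    by_cases hn : n < c
    · simp only [hn, if_true]
      rw [← h1 n hn]; exact CTyping.var Δ n
    · simp only [hn, if_false]
      rw [← h2 n (le_of_not_gt hn)]; exact CTyping.var Δ (n + d)
  | abs harr _ ih =>
    intro c Δ h1 h2
    refine CTyping.abs harr (ih (c + 1) _ ?_ ?_)
    · intro n hn
      match n with
      | 0 => rfl
      | m + 1 => exact h1 m (by omega)
    · intro n hn
      match n with
      | m + 1 =>
        show push Δ _ (m + 1 + d) = _
        rw [show m + 1 + d = (m + d) + 1 from by omega]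
        exact h2 m (by omega)
  | app harr _ _ iht ihu =>
    intro c Δ h1 h2
    exact CTyping.app harr (iht c Δ h1 h2) (ihu c Δ h1 h2)

lemma subst_typing {Γ : ℕ → CType} {t : Term} {B : CType} (h : CTyping Γ t B) :
    ∀ k (s : Term) (Δ : ℕ → CType), (∀ n, n < k → Δ n = Γ n) → (∀ n, k < n → Δ (n - 1) = Γ n) →
    CTyping (fun n => Δ (n + k)) s (Γ k) → CTyping Δ (Term.subst k s t) B := by
  induction h with
  | var Γ n =>
    intro k s Δ h1 h2 hs
    simp only [Term.subst]
    by_cases hn : n < k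
    · simp only [hn, if_true]
      rw [← h1 n hn]; exact CTyping.var Δ n
    · simp only [hn, if_false]
      by_cases he : n = k
      · simp only [he, if_true]
        subst he
        exact shift_typing hs n 0 Δ (fun m hm => by omega) (fun m _ => rfl)
      · simp only [he, if_false]
        rw [← h2 n (by omega)]; exact CTyping.var Δ (n - 1)
  | abs harr _ ih =>
    intro k s Δ h1 h2 hs
    refine CTyping.abs harr (ih (k + 1) s _ ?_ ?_ ?_)
    · intro n hn
      match n with
      | 0 => rfl
      | m + 1 => exact h1 m (by omega)
    · intro n hn
      match n with
      | m + 1 =>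
        show push Δ _ m = _
        match m, hn with
        | j + 1, _ => exact h2 (j + 1) (by omega)
    · exact hs
  | app harr _ _ iht ihu =>
    intro k s Δ h1 h2 hs
    exact CTyping.app harr (iht k s Δ h1 h2 hs) (ihu k s Δ h1 h2 hs)

/-- Subject reduction for the coinductively-typed simply typed λ-calculus. -/
theorem coinductive_subject_reduction {Γ : ℕ → CType} {t t' : Term} {A : CType}
    (h : CTyping Γ t A) (hb : Beta t t') : CTyping Γ t' A := by
  induction h generalizing t' with
  | var Γ n => cases hb
  | abs harr _ ih =>
    cases hb with
    | lam hb' => exact CTyping.abs harr (ih hb')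
  | app harr ht hu iht ihu =>
    cases hb with
    | beta b a =>
      cases ht with
      | abs harr2 hb2 =>
        obtain ⟨hA, hB⟩ := harr2.unique harr
        subst hA; subst hB
        exact subst_typing hb2 0 _ _ (fun n hn => absurd hn (by omega))
          (fun n hn => by match n, hn with | m + 1, _ => rfl) hu
    | appL u hb' => exact CTyping.app harr (iht hb') hu
    | appR t hb' => exact CTyping.app harr ht (ihu hb')
end

section
/- Let t be a λ-term viewed as a labelled tree with support supp(t) ⊆ {0,1,2}*, and define the ascendance relation on pairs (a,c) ∈ ℕ* × ℕ* by: (a,c) ⇒ (a·1, 1·c) if t(ā) = @, and (a, 1·c) ⇒ (a·0, c) if t(ā) = λx (where ā is the letterwise collapse of a with k̄ = min(k,2)). Then whenever (a₁,c₁) and (a₂,c₂) are related by the reflexive-transitive-symmetric closure of ⇒, there exists a word a₃ ∈ {0,1}* such that a₂ = a₁·a₃ or a₁ = a₂·a₃, and there exists i ≥ 0 such that c₂ = 1^i · c₁ or c₁ = 1^i · c₂. -/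
/-- The constructor of a λ-term at a position. -/
inductive TLabel : Type
  | var : ℕ → TLabel
  | lam : TLabel
  | app : TLabel
  deriving DecidableEq

/-- The constructor of `t` at position `b ∈ {0,1,2}*` (0 under λ, 1 left of @, 2 right of @),
`none` if `b` is not in the support of `t`. -/
def labelAt : Term → List ℕ → Option TLabel
  | .var n, [] => some (.var n)
  | .lam _, [] => some .lam
  | .app _ _, [] => some .app
  | .lam t, 0 :: b => labelAt t b
  | .app t _, 1 :: b => labelAt t b
  | .app _ u, 2 :: b => labelAt u b
  | _, _ => none

/-- Letterwise collapse `k ↦ min k 2` of a word over ℕ. -/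
def collapse (a : List ℕ) : List ℕ := a.map (fun k => min k 2)

/-- The ascendance relation on pairs `(a, c)` of outer/inner positions, defined from `t`:
`(a,c) ⇒ (a·1, 1·c)` if `t(ā) = @`, and `(a, 1·c) ⇒ (a·0, c)` if `t(ā) = λ`. -/
inductive Asc (t : Term) : List ℕ × List ℕ → List ℕ × List ℕ → Prop
  | app (a c : List ℕ) : labelAt t (collapse a) = some .app →
      Asc t (a, c) (a ++ [1], 1 :: c)
  | lam (a c : List ℕ) : labelAt t (collapse a) = some .lam →
      Asc t (a, 1 :: c) (a ++ [0], c)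

/-- `Asc t` is functional (right-unique). -/
lemma Asc.functional {t : Term} {p q q' : List ℕ × List ℕ}
    (h : Asc t p q) (h' : Asc t p q') : q = q' := by
  cases h <;> cases h' <;> simp_all

/-- Inner-position relation: differ by a prefix of 1's. -/
def Pc (c c' : List ℕ) : Prop :=
  ∃ i : ℕ, c' = List.replicate i 1 ++ c ∨ c = List.replicate i 1 ++ c'

lemma Pc.refl (c : List ℕ) : Pc c c := ⟨0, Or.inl rfl⟩

lemma Pc.symm {c c' : List ℕ} (h : Pc c c') : Pc c' c := by
  obtain ⟨i, h | h⟩ := h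
  · exact ⟨i, Or.inr h⟩
  · exact ⟨i, Or.inl h⟩

lemma replicate_cancel {i j : ℕ} {c c' : List ℕ} (hij : j ≤ i)
    (h : List.replicate i 1 ++ c = List.replicate j (1 : ℕ) ++ c') :
    c' = List.replicate (i - j) 1 ++ c := by
  have : List.replicate i (1 : ℕ) = List.replicate j 1 ++ List.replicate (i - j) 1 := by
    rw [← List.replicate_add]; congr 1; omega
  rw [this, List.append_assoc] at h
  exact (List.append_cancel_left h).symm

lemma Pc.trans {c₁ c₂ c₃ : List ℕ} (h : Pc c₁ c₂) (h' : Pc c₂ c₃) : Pc c₁ c₃ := by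
  obtain ⟨i, h | h⟩ := h <;> obtain ⟨j, h' | h'⟩ := h'
  · exact ⟨j + i, Or.inl (by rw [h', h, ← List.append_assoc, ← List.replicate_add])⟩
  · have key : List.replicate i 1 ++ c₁ = List.replicate j (1 : ℕ) ++ c₃ := by
      rw [← h]; exact h'
    rcases le_total j i with hij | hij
    · exact ⟨i - j, Or.inl (replicate_cancel hij key)⟩
    · exact ⟨j - i, Or.inr (replicate_cancel hij key.symm)⟩
  · rcases le_total i j with hij | hij
    · refine ⟨j - i, Or.inl ?_⟩
      rw [h', h, ← List.append_assoc, ← List.replicate_add]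
      congr 2; omega
    · refine ⟨i - j, Or.inr ?_⟩
      rw [h, h', ← List.append_assoc, ← List.replicate_add]
      congr 2; omega
  · exact ⟨i + j, Or.inr (by rw [h, h', ← List.append_assoc, ← List.replicate_add])⟩

/-- Along forward reduction the outer word only grows by `{0,1}`-letters, and inner
words differ by a prefix of 1's. -/
lemma rtg_shape {t : Term} {a c : List ℕ} {p : List ℕ × List ℕ}
    (h : Relation.ReflTransGen (Asc t) (a, c) p) :
    (∃ s : List ℕ, (∀ x ∈ s, x = 0 ∨ x = 1) ∧ p.1 = a ++ s) ∧ Pc c p.2 := by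
  induction h with
  | refl => exact ⟨⟨[], by simp, by simp⟩, Pc.refl c⟩
  | tail _ hstep ih =>
    obtain ⟨⟨s, hs, hps⟩, hpc⟩ := ih
    cases hstep with
    | app b d hl =>
      refine ⟨⟨s ++ [1], ?_, by simp only [] at hps ⊢; rw [show b = a ++ s from hps, List.append_assoc]⟩, ?_⟩
      · intro x hx; rcases List.mem_append.mp hx with hx | hx
        · exact hs x hx
        · simp at hx; omega
      · exact hpc.trans ⟨1, Or.inl rfl⟩
    | lam b d hl =>
      refine ⟨⟨s ++ [0], ?_, by simp only [] at hps ⊢; rw [show b = a ++ s from hps, List.append_assoc]⟩, ?_⟩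
      · intro x hx; rcases List.mem_append.mp hx with hx | hx
        · exact hs x hx
        · simp at hx; omega
      · exact hpc.trans ⟨1, Or.inr rfl⟩

lemma eqvGen_join {t : Term} {p q : List ℕ × List ℕ}
    (h : Relation.EqvGen (Asc t) p q) :
    Relation.Join (Relation.ReflTransGen (Asc t)) p q := by
  have heq := Relation.equivalence_join_reflTransGen
    (r := Asc t) (fun a b c hab hac => ⟨c, (Asc.functional hab hac ▸ Relation.ReflGen.refl),
      Relation.ReflTransGen.refl⟩)
  induction h with
  | rel x y hxy => exact ⟨y, Relation.ReflTransGen.single hxy, Relation.ReflTransGen.refl⟩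
  | refl x => exact heq.refl x
  | symm x y _ ih => exact heq.symm ih
  | trans x y z _ _ ih₁ ih₂ => exact heq.trans ih₁ ih₂

/-- Shape of ascendant threads: if `(a₁,c₁)` and `(a₂,c₂)` are related by the
reflexive-transitive-symmetric closure of the ascendance relation, then the outer
positions differ by a suffix over `{0,1}` and the inner positions differ by a prefix
of 1's. -/
theorem ascendant_thread_shape (t : Term) (a₁ c₁ a₂ c₂ : List ℕ)
    (h : Relation.EqvGen (Asc t) (a₁, c₁) (a₂, c₂)) :
    (∃ a₃ : List ℕ, (∀ x ∈ a₃, x = 0 ∨ x = 1) ∧ (a₂ = a₁ ++ a₃ ∨ a₁ = a₂ ++ a₃)) ∧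
      (∃ i : ℕ, c₂ = List.replicate i 1 ++ c₁ ∨ c₁ = List.replicate i 1 ++ c₂) := by
  obtain ⟨w, h₁, h₂⟩ := eqvGen_join h
  obtain ⟨⟨s₁, hs₁, hw₁⟩, hc₁⟩ := rtg_shape h₁
  obtain ⟨⟨s₂, hs₂, hw₂⟩, hc₂⟩ := rtg_shape h₂
  constructor
  · have hpp : a₁ <+: a₂ ∨ a₂ <+: a₁ :=
      List.prefix_or_prefix_of_prefix (⟨s₁, hw₁.symm⟩ : a₁ <+: w.1) ⟨s₂, hw₂.symm⟩
    rcases hpp with ⟨u, hu⟩ | ⟨u, hu⟩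
    · refine ⟨u, ?_, Or.inl hu.symm⟩
      intro x hx
      apply hs₁ x
      have : a₁ ++ s₁ = a₁ ++ (u ++ s₂) := by
        rw [← List.append_assoc, hu, ← hw₂, ← hw₁]
      have := List.append_cancel_left this
      rw [this]; exact List.mem_append.mpr (Or.inl hx)
    · refine ⟨u, ?_, Or.inr hu.symm⟩
      intro x hx
      apply hs₂ x
      have : a₂ ++ s₂ = a₂ ++ (u ++ s₁) := by
        rw [← List.append_assoc, hu, ← hw₂, ← hw₁]
      have := List.append_cancel_left this
      rw [this]; exact List.mem_append.mpr (Or.inl hx)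
  · exact hc₁.trans hc₂.symm
end
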